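/- Let n be a positive integer, ω = e^{2πi/n}, U = diag(1, ω, ..., ω^{n−1}), and for each vertex v of the orthogonality graph Ω(n) let z_v ∈ {±1}^n/√n be the corresponding unit vector. Then the projectors P_{v,k} = U^k z_v z_v† (U†)^k for k ∈ [n] form a quantum n-coloring of Ω(n): Σ_{k∈[n]} P_{v,k} = I_n for every v, and P_{v,k}P_{w,k} = 0 whenever z_v ⊥ z_w. -/

import Mathlib

/-! Conjugation by the unitary `U^k` is a ⋆-algebra automorphism, so each `P_{v,k}` inherits
self-adjointness and idempotence from the rank-one projector `z_v z_vᴴ`, and `P_{v,k} P_{w,k}` is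
the image of `z_v (z_vᴴ z_w) z_wᴴ = 0`. For the sum, `(U^k A (Uᴴ)^k)_{ij} = (ω^i / ω^j)^k A_{ij}`,
so summing over `k` kills the off-diagonal entries (a geometric sum of a nontrivial `n`-th root
of unity) and multiplies the diagonal by `n`; as `|(z_v)_i|² = 1/n`, the result is `I`. -/

open Matrix Complex

/-- The normalized `±1` unit vector in `ℂ^n` corresponding to a vertex of the
orthogonality graph `Ω(n)`. -/
noncomputable def normVec {n : ℕ} (v : {z : Fin n → ℝ // ∀ i, z i = 1 ∨ z i = -1}) :
    Fin n → ℂ :=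
  fun i => (v.val i : ℂ) / (Real.sqrt n : ℂ)

/-- The diagonal unitary `U = diag(1, ω, …, ω^{n-1})` with `ω = e^{2πi/n}`. -/
noncomputable def omegaDiag (n : ℕ) : Matrix (Fin n) (Fin n) ℂ :=
  Matrix.diagonal fun j : Fin n => Complex.exp (2 * Real.pi * Complex.I * (j : ℕ) / n)

theorem IsPrimitiveRoot.geom_sum_pow_div_pow {K : Type*} [Field K] {ζ : K} {n i j : ℕ}
    (hζ : IsPrimitiveRoot ζ n) (hi : i < n) (hj : j < n) :
    ∑ k ∈ Finset.range n, (ζ ^ i / ζ ^ j) ^ k = if i = j then (n : K) else 0 := by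
  have hζ0 : ζ ≠ 0 := hζ.ne_zero (by omega)
  split_ifs with hij
  · simp [hij, div_self (pow_ne_zero j hζ0)]
  · have hpow : (ζ ^ i / ζ ^ j) ^ n = 1 := by
      rw [div_pow, ← pow_mul, ← pow_mul, mul_comm i, mul_comm j, pow_mul, pow_mul,
        hζ.pow_eq_one, one_pow, one_pow, div_one]
    have hne : ζ ^ i / ζ ^ j ≠ 1 :=
      fun h => hij (hζ.pow_inj hi hj ((div_eq_one_iff_eq (pow_ne_zero j hζ0)).mp h))
    rw [geom_sum_eq hne, hpow, sub_self, zero_div]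

theorem IsPrimitiveRoot.star_eq_inv {ζ : ℂ} {n : ℕ} (hζ : IsPrimitiveRoot ζ n) (hn : n ≠ 0) :
    star ζ = ζ⁻¹ :=
  (Complex.inv_eq_conj (hζ.norm'_eq_one hn)).symm

theorem Matrix.diagonal_mem_unitary {m α : Type*} [Fintype m] [DecidableEq m] [Semiring α]
    [StarRing α] {d : m → α} (hd : ∀ i, d i ∈ unitary α) :
    diagonal d ∈ unitary (Matrix m m α) := by
  rw [Unitary.mem_iff, star_eq_conjTranspose, diagonal_conjTranspose, diagonal_mul_diagonal,
    diagonal_mul_diagonal, ← diagonal_one]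
  exact ⟨congrArg diagonal (funext fun i => Unitary.star_mul_self_of_mem (hd i)),
    congrArg diagonal (funext fun i => Unitary.mul_star_self_of_mem (hd i))⟩

theorem Matrix.vecMulVec_mul_vecMulVec_eq_zero {l m o α : Type*} [Fintype m]
    [NonUnitalCommSemiring α] (u : l → α) {v w : m → α} (x : o → α) (h : v ⬝ᵥ w = 0) :
    vecMulVec u v * vecMulVec w x = 0 := by
  ext i j
  simp [vecMulVec_mul_vecMulVec, h, vecMulVec_apply]

theorem Matrix.isSelfAdjoint_vecMulVec_star {m α : Type*} [Mul α] [StarMul α] (z : m → α) :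
    IsSelfAdjoint (vecMulVec z (star z)) := by
  rw [IsSelfAdjoint, star_eq_conjTranspose, conjTranspose_vecMulVec, star_star]

theorem Matrix.isIdempotentElem_vecMulVec_star {m α : Type*} [Fintype m] [CommSemiring α]
    [Star α] {z : m → α} (hz : star z ⬝ᵥ z = 1) :
    IsIdempotentElem (vecMulVec z (star z)) := by
  rw [IsIdempotentElem, vecMulVec_mul_vecMulVec, hz, one_smul]

theorem Matrix.sum_diagonal_pow_mul_mul_conjTranspose_pow {n : ℕ} {ζ : ℂ}
    (hζ : IsPrimitiveRoot ζ n) (A : Matrix (Fin n) (Fin n) ℂ) :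
    ∑ k : Fin n, (diagonal fun j : Fin n => ζ ^ (j : ℕ)) ^ (k : ℕ) * A *
      ((diagonal fun j : Fin n => ζ ^ (j : ℕ))ᴴ) ^ (k : ℕ) = (n : ℂ) • diagonal A.diag := by
  ext i j
  have hn : n ≠ 0 := by have := i.pos; omega
  have hterm : ∀ k : ℕ, ((diagonal fun j : Fin n => ζ ^ (j : ℕ)) ^ k * A *
      ((diagonal fun j : Fin n => ζ ^ (j : ℕ))ᴴ) ^ k) i j =
      A i j * (ζ ^ (i : ℕ) / ζ ^ (j : ℕ)) ^ k := by
    intro k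
    rw [diagonal_conjTranspose, diagonal_pow, diagonal_pow, mul_diagonal, diagonal_mul]
    simp only [Pi.pow_apply, Pi.star_apply, star_pow, hζ.star_eq_inv hn]
    ring
  rw [sum_apply]
  simp_rw [hterm]
  rw [Fin.sum_univ_eq_sum_range (fun k => A i j * (ζ ^ (i : ℕ) / ζ ^ (j : ℕ)) ^ k) n,
    ← Finset.mul_sum, hζ.geom_sum_pow_div_pow i.isLt j.isLt]
  by_cases hij : i = j
  · subst hij; simp [mul_comm]
  · simp [hij, Fin.val_injective.ne hij]

theorem omegaDiag_eq (n : ℕ) :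
    omegaDiag n = diagonal fun j : Fin n => exp (2 * Real.pi * I / n) ^ (j : ℕ) := by
  refine congrArg diagonal (funext fun j => ?_)
  rw [← Complex.exp_nat_mul]
  congr 1
  ring

theorem omegaDiag_mem_unitary {n : ℕ} (hn : n ≠ 0) :
    omegaDiag n ∈ unitary (Matrix (Fin n) (Fin n) ℂ) := by
  have hζ := Complex.isPrimitiveRoot_exp n hn
  have hζu : exp (2 * Real.pi * I / n) ∈ unitary ℂ := by
    rw [Unitary.mem_iff_star_mul_self, hζ.star_eq_inv hn, inv_mul_cancel₀ (hζ.ne_zero hn)]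
  rw [omegaDiag_eq]
  exact diagonal_mem_unitary fun j => pow_mem hζu _

theorem omegaDiag_pow_mul_mul_conjTranspose_pow {n : ℕ} (hn : n ≠ 0) (k : ℕ)
    (A : Matrix (Fin n) (Fin n) ℂ) :
    omegaDiag n ^ k * A * (omegaDiag n)ᴴ ^ k =
      Unitary.conjStarAlgAut ℂ _ (⟨omegaDiag n, omegaDiag_mem_unitary hn⟩ ^ k) A := by
  rw [Unitary.conjStarAlgAut_apply, SubmonoidClass.coe_pow, star_pow, star_eq_conjTranspose]

theorem normVec_mul_star_self {n : ℕ} (v : {z : Fin n → ℝ // ∀ i, z i = 1 ∨ z i = -1})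
    (i : Fin n) : normVec v i * star (normVec v i) = (n : ℂ)⁻¹ := by
  have hv : (v.val i : ℂ) * v.val i = 1 := by
    rcases v.property i with h | h <;> simp [h]
  have hsqrt : (Real.sqrt n : ℂ) * Real.sqrt n = n := by
    rw [← ofReal_mul, Real.mul_self_sqrt n.cast_nonneg, ofReal_natCast]
  rw [normVec, star_div₀, Complex.star_def, conj_ofReal, conj_ofReal, div_mul_div_comm, hv,
    hsqrt, one_div]

theorem star_normVec_dotProduct_self {n : ℕ} (hn : n ≠ 0)
    (v : {z : Fin n → ℝ // ∀ i, z i = 1 ∨ z i = -1}) :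
    star (normVec v) ⬝ᵥ normVec v = 1 := by
  simp only [dotProduct, Pi.star_apply, mul_comm (star _), normVec_mul_star_self]
  simp [hn]

theorem stmt18 (n : ℕ) (hn : 0 < n)
    (P : {z : Fin n → ℝ // ∀ i, z i = 1 ∨ z i = -1} → Fin n →
      Matrix (Fin n) (Fin n) ℂ)
    (hP : ∀ v k, P v k = (omegaDiag n) ^ (k : ℕ) *
      Matrix.vecMulVec (normVec v) (star (normVec v)) * ((omegaDiag n)ᴴ) ^ (k : ℕ)) :
    (∀ v k, (P v k)ᴴ = P v k ∧ P v k * P v k = P v k) ∧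
    (∀ v, ∑ k : Fin n, P v k = 1) ∧
    (∀ v w, star (normVec v) ⬝ᵥ normVec w = 0 → ∀ k, P v k * P w k = 0) := by
  have hn : n ≠ 0 := hn.ne'
  set ad := fun k : ℕ => Unitary.conjStarAlgAut ℂ (Matrix (Fin n) (Fin n) ℂ)
    (⟨omegaDiag n, omegaDiag_mem_unitary hn⟩ ^ k)
  have hPconj : ∀ v k, P v k = ad k (vecMulVec (normVec v) (star (normVec v))) :=
    fun v k => (hP v k).trans (omegaDiag_pow_mul_mul_conjTranspose_pow hn k _)
  refine ⟨fun v k => ⟨?_, ?_⟩, fun v => ?_, fun v w h k => ?_⟩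
  · rw [hPconj, ← star_eq_conjTranspose, ← map_star, (isSelfAdjoint_vecMulVec_star _).star_eq]
  · rw [hPconj, ← map_mul,
      (isIdempotentElem_vecMulVec_star (star_normVec_dotProduct_self hn v)).eq]
  · have hdiag : (vecMulVec (normVec v) (star (normVec v))).diag = fun _ => (n : ℂ)⁻¹ :=
      funext (normVec_mul_star_self v)
    simp_rw [hP]
    rw [omegaDiag_eq, sum_diagonal_pow_mul_mul_conjTranspose_pow (isPrimitiveRoot_exp n hn),
      hdiag, ← diagonal_smul, ← diagonal_one]
    exact congrArg diagonal (funext fun _ => mul_inv_cancel₀ (Nat.cast_ne_zero.mpr hn))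
  · rw [hPconj, hPconj, ← map_mul, vecMulVec_mul_vecMulVec_eq_zero _ _ h, map_zero]
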